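/- In the general reduction graph G, if S is a feasible bootstrap solution containing a blue vertex w_i^{(v)} (an auxiliary vertex introduced for v ∈ V_H), then (S \ {w_i^{(v)}}) ∪ {v} is also a feasible bootstrap solution. -/

import Mathlib

/-!
Write an interesting path as `p = P ++ [y]` and let `u` be the last red vertex of `P`. Since `u`
has an out-edge it is an original vertex (clones are sinks), so cutting `p` after `u` and closing
it with the edge `u → u'` to the clone gives an interesting path with the same number of red
vertices. `S` meets it before `u'`, hence inside `P`. If the vertex met is `w_i^{(v)}`, the path
leaves it only through blue vertices `w_j^{(v)}` until it reaches `v`, and since the cut path ends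
red, `v` itself lies in `P`.
-/

/-- Colors of vertices in the circuit DAG. -/
inductive Color where
  | white | blue | red
deriving DecidableEq

/-- Number of red vertices on a path (given as a list of vertices). -/
def redCount {V : Type*} (color : V → Color) (p : List V) : ℕ :=
  (p.filter (fun v => decide (color v = Color.red))).length

/-- `p` is an interesting path: it starts and ends at red vertices and traverses exactly
`L+1` red vertices. -/
def IntPath {V : Type*} (E : V → V → Prop) (color : V → Color) (L : ℕ) (p : List V) : Prop :=
  ∃ hp : p ≠ [], p.Chain' E ∧ color (p.head hp) = Color.red ∧
    color (p.getLast hp) = Color.red ∧ redCount color p = L + 1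

variable {α : Type*} [Fintype α] [DecidableEq α]

/-- Indegree of a vertex of `H`. -/
def windeg (EH : α → α → Prop) [DecidableRel EH] (v : α) : ℕ :=
  (Finset.univ.filter (fun u => EH u v)).card

/-- Vertex set of the general reduction graph `G`: original vertices `V_H`
(`.inl (.inl v)`, red), clones `V_H'` (`.inl (.inr v)`, red), the white source `s₀`
(`.inr (.inl ())`), and the auxiliary blue chain vertices `w_i^{(v)}`
(`.inr (.inr ⟨v, i⟩)`, used when `indegree(v) ≥ 3`). -/
abbrev GVt (α : Type*) [Fintype α] [DecidableEq α]
    (EH : α → α → Prop) [DecidableRel EH] :=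
  (α ⊕ α) ⊕ (Unit ⊕ (Σ v : α, Fin (windeg EH v)))

/-- Colors in the general reduction graph. -/
def gcolor (EH : α → α → Prop) [DecidableRel EH] : GVt α EH → Color
  | .inl _ => Color.red
  | .inr (.inl _) => Color.white
  | .inr (.inr _) => Color.blue

/-- Edges of the general reduction graph `G` built from `H` using, for each `v`, an
enumeration `ord v` of the predecessors of `v`: edges of `H` going into vertices of indegree
at most 2, edges `v → v'` to the clones, edges `s₀ → v` for indegree at most 1, and, for each
`v` of indegree `d ≥ 3`, the blue chain `w₀^{(v)} → ⋯ → w_{d-1}^{(v)} → v` together with the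
edges `(ord v i) → w_i^{(v)}` (parallel multiplicities are irrelevant for paths). -/
def GE (EH : α → α → Prop) [DecidableRel EH]
    (ord : ∀ v : α, Fin (windeg EH v) ≃ {u : α // EH u v}) :
    GVt α EH → GVt α EH → Prop
  | .inl (.inl u), .inl (.inl v) => EH u v ∧ windeg EH v ≤ 2
  | .inl (.inl u), .inl (.inr v) => u = v
  | .inr (.inl _), .inl (.inl v) => windeg EH v ≤ 1
  | .inl (.inl u), .inr (.inr ⟨v, i⟩) => 3 ≤ windeg EH v ∧ ((ord v i : {u : α // EH u v}) : α) = u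
  | .inr (.inr ⟨v, i⟩), .inr (.inr ⟨v', j⟩) =>
      3 ≤ windeg EH v ∧ v = v' ∧ (i : ℕ) + 1 = (j : ℕ)
  | .inr (.inr ⟨v, i⟩), .inl (.inl v') =>
      3 ≤ windeg EH v ∧ v = v' ∧ (i : ℕ) + 1 = windeg EH v
  | _, _ => False

namespace List

variable {β : Type*}

theorem exists_eq_append_cons_of_exists_last {Q : β → Prop} {l : List β} (h : ∃ x ∈ l, Q x) :
    ∃ l₁ u l₂, l = l₁ ++ u :: l₂ ∧ Q u ∧ ∀ c ∈ l₂, ¬ Q c := by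
  induction l using List.reverseRecOn with
  | nil => simp at h
  | append_singleton l a ih =>
    by_cases ha : Q a
    · exact ⟨l, a, [], by simp, ha, by simp⟩
    · obtain ⟨l₁, u, l₂, rfl, hu, hl₂⟩ := ih (by simpa [ha] using h)
      refine ⟨l₁, u, l₂ ++ [a], by simp, hu, ?_⟩
      simp only [mem_append, mem_singleton]
      rintro c (hc | rfl)
      exacts [hl₂ c hc, ha]

theorem IsChain.mem_of_forall_rel_exit {R : β → β → Prop} {B : β → Prop} {t : β}
    (hR : ∀ a b, R a b → B a → B b ∨ b = t) {x : β} {l : List β} (hc : l.IsChain R)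
    (hx : x ∈ l) (hBx : B x) (hlast : ∀ y ∈ l.getLast?, ¬ B y) : t ∈ l := by
  induction l generalizing x with
  | nil => simp at hx
  | cons a l ih =>
    rcases List.mem_cons.mp hx with rfl | hx
    · cases l with
      | nil => exact absurd hBx (hlast x (by simp))
      | cons b l =>
        rw [List.isChain_cons_cons] at hc
        rcases hR x b hc.1 hBx with hBb | rfl
        · refine mem_cons_of_mem _ (ih hc.2 mem_cons_self hBb ?_)
          simpa only [getLast?_cons_cons] using hlast
        · exact mem_cons_of_mem _ mem_cons_self
    · exact mem_cons_of_mem _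
        (ih hc.tail hx hBx fun y hy => hlast y (by simp [getLast?_cons, Option.mem_def.mp hy]))

end List

section IntPath

variable {V : Type*} {color : V → Color}

theorem redCount_append (p q : List V) :
    redCount color (p ++ q) = redCount color p + redCount color q := by
  simp [redCount, List.filter_append]

theorem redCount_cons (x : V) (p : List V) :
    redCount color (x :: p) = redCount color [x] + redCount color p :=
  redCount_append [x] p

theorem redCount_eq_zero {p : List V} (h : ∀ c ∈ p, color c ≠ Color.red) :
    redCount color p = 0 := by
  simpa [redCount, List.filter_eq_nil_iff] using h

theorem redCount_singleton_of_red {x : V} (hx : color x = Color.red) :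
    redCount color [x] = 1 := by
  simp [redCount, hx]

theorem IntPath.redirect {E : V → V → Prop} {L : ℕ} {P M : List V} {u u' y : V}
    (hp : IntPath E color L (P ++ u :: M ++ [y])) (hM : ∀ c ∈ M, color c ≠ Color.red)
    (hu : E u u') (hu' : color u' = Color.red) : IntPath E color L (P ++ [u, u']) := by
  obtain ⟨_, hc, hhead, hlast, hcount⟩ := hp
  have hy : color y = Color.red := by simpa using hlast
  refine ⟨by simp, ?_, ?_, by simpa using hu', ?_⟩
  · have hPu : (P ++ [u]).IsChain E := hc.infix (List.IsPrefix.isInfix ⟨M ++ [y], by simp⟩)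
    rw [show P ++ [u, u'] = P ++ [u] ++ [u'] by simp]
    exact hPu.append (List.isChain_singleton u') (by simpa using hu)
  · cases P <;> simpa using hhead
  · rw [← hcount, redCount_append, redCount_append, redCount_append, redCount_cons u M,
      redCount_cons u [u'], redCount_eq_zero hM, redCount_singleton_of_red hy,
      redCount_singleton_of_red hu']
    omega

end IntPath

section ReductionGraph

variable {EH : α → α → Prop} [DecidableRel EH]
  {ord : ∀ v : α, Fin (windeg EH v) ≃ {u : α // EH u v}}

def IsAuxVertex (EH : α → α → Prop) [DecidableRel EH] (v : α) (x : GVt α EH) : Prop :=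
  ∃ j, x = .inr (.inr ⟨v, j⟩)

theorem IsAuxVertex.of_GE {v : α} {x y : GVt α EH} (h : GE EH ord x y)
    (hx : IsAuxVertex EH v x) : IsAuxVertex EH v y ∨ y = .inl (.inl v) := by
  obtain ⟨j, rfl⟩ := hx
  rcases y with (u | u) | (u | ⟨v', j'⟩)
  · simp_all [GE]
  all_goals simp only [GE] at h
  obtain ⟨-, rfl, -⟩ := h
  exact .inl ⟨j', rfl⟩

theorem exists_eq_inl_inl_of_red_of_GE {x y : GVt α EH} (hx : gcolor EH x = Color.red)
    (h : GE EH ord x y) : ∃ a, x = .inl (.inl a) := by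
  rcases x with (a | a) | (a | a)
  · exact ⟨a, rfl⟩
  · rcases y with (_ | _) | (_ | _) <;> simp [GE] at h
  all_goals simp [gcolor] at hx

end ReductionGraph

theorem stmt14_general (EH : α → α → Prop) [DecidableRel EH]
    (L : ℕ)
    (ord : ∀ v : α, Fin (windeg EH v) ≃ {u : α // EH u v})
    (S : Set (GVt α EH))
    (hfeas : ∀ p : List (GVt α EH), IntPath (GE EH ord) (gcolor EH) L p →
      ∃ z ∈ p.dropLast, z ∈ S)
    (v : α) (i : Fin (windeg EH v)) :
    ∀ p : List (GVt α EH), IntPath (GE EH ord) (gcolor EH) L p →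
      ∃ z ∈ p.dropLast,
        z ∈ (S \ {(Sum.inr (Sum.inr ⟨v, i⟩) : GVt α EH)}) ∪
            {(Sum.inl (Sum.inl v) : GVt α EH)} := by
  intro p hp
  obtain ⟨z₀, hz₀, -⟩ := hfeas p hp
  obtain ⟨P, y, rfl⟩ : ∃ P y, p = P ++ [y] := by
    simpa [hp.1] using p.eq_nil_or_concat'
  rw [List.dropLast_concat] at hz₀ ⊢
  have hP : P ≠ [] := List.ne_nil_of_mem hz₀
  obtain ⟨_, hc, hhead, -⟩ := id hp
  obtain ⟨P₀, u, M, rfl, hu, hM⟩ := List.exists_eq_append_cons_of_exists_last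
    (Q := fun x => gcolor EH x = Color.red)
    ⟨P.head hP, List.head_mem hP, by simpa [List.head_append_of_ne_nil hP] using hhead⟩
  obtain ⟨a, rfl⟩ : ∃ a, u = .inl (.inl a) := by
    obtain ⟨b, l, hbl⟩ := List.exists_cons_of_ne_nil (List.concat_ne_nil y M)
    have hub : (u :: b :: l).IsChain (GE EH ord) := hc.infix ⟨P₀, [], by simp [← hbl]⟩
    exact exists_eq_inl_inl_of_red_of_GE hu (List.isChain_cons_cons.mp hub).1
  have hedge : GE EH ord (.inl (.inl a)) (.inl (.inr a)) := rfl
  obtain ⟨z, hz, hzS⟩ := hfeas _ (hp.redirect hM hedge rfl)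
  rw [show P₀ ++ [.inl (.inl a), .inl (.inr a)] = P₀ ++ [.inl (.inl a)] ++ [.inl (.inr a)] by simp,
    List.dropLast_concat] at hz
  have hpre : P₀ ++ [.inl (.inl a)] <+: P₀ ++ .inl (.inl a) :: M := ⟨M, by simp⟩
  by_cases hzw : z = .inr (.inr ⟨v, i⟩)
  · refine ⟨.inl (.inl v), ?_, .inr rfl⟩
    have hc' := hc.infix (hpre.trans (List.prefix_append _ _)).isInfix
    exact hpre.subset (hc'.mem_of_forall_rel_exit (B := IsAuxVertex EH v)
      (fun _ _ => IsAuxVertex.of_GE) hz ⟨i, hzw⟩ (by simp [IsAuxVertex]))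
  · exact ⟨z, hpre.subset hz, .inl ⟨hzS, hzw⟩⟩

/-- Proposition 1 of the paper: in the general reduction graph `G`, if a
feasible bootstrap solution `S` contains a blue auxiliary vertex `w_i^{(v)}`, then
`(S \ {w_i^{(v)}}) ∪ {v}` is also a feasible bootstrap solution. -/
theorem stmt14 (EH : α → α → Prop) [DecidableRel EH]
    (hdag : WellFounded EH) (L : ℕ) (hL : 2 ≤ L)
    (ord : ∀ v : α, Fin (windeg EH v) ≃ {u : α // EH u v})
    (S : Set (GVt α EH))
    (hfeas : ∀ p : List (GVt α EH), IntPath (GE EH ord) (gcolor EH) L p →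
      ∃ z ∈ p.dropLast, z ∈ S)
    (v : α) (i : Fin (windeg EH v))
    (hw : (Sum.inr (Sum.inr ⟨v, i⟩) : GVt α EH) ∈ S) :
    ∀ p : List (GVt α EH), IntPath (GE EH ord) (gcolor EH) L p →
      ∃ z ∈ p.dropLast,
        z ∈ (S \ {(Sum.inr (Sum.inr ⟨v, i⟩) : GVt α EH)}) ∪
            {(Sum.inl (Sum.inl v) : GVt α EH)} :=
  stmt14_general EH L ord S hfeas v i
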